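/- arXiv:2403.18564 — 4 statements merged into one kernel-verified Lean document; each statement's English description precedes it below -/
import Mathlib

section
/- The Minkowski XOR of two logical zonotopes is exactly the logical zonotope obtained by XORing the centers and concatenating the generator lists: ⟨c1, G1⟩ ⊕ ⟨c2, G2⟩ = ⟨c1 ⊕ c2, [G1, G2]⟩. -/
/-- Logical zonotope over 𝔹 = ZMod 2. -/
def LZ {n : ℕ} {ι : Type*} [Fintype ι] (c : Fin n → ZMod 2)
    (g : ι → Fin n → ZMod 2) : Set (Fin n → ZMod 2) :=
  { x | ∃ β : ι → ZMod 2, x = c + ∑ i, β i • g i }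

/-- Minkowski XOR of two sets of Boolean vectors. -/
def minkXor {n : ℕ} (L1 L2 : Set (Fin n → ZMod 2)) : Set (Fin n → ZMod 2) :=
  { z | ∃ z1 ∈ L1, ∃ z2 ∈ L2, z = z1 + z2 }

/-- `⟨c1, G1⟩ ⊕ ⟨c2, G2⟩ = ⟨c1 ⊕ c2, [G1, G2]⟩`. -/
theorem LZ_minkXor {n h1 h2 : ℕ} (c1 c2 : Fin n → ZMod 2)
    (g1 : Fin h1 → Fin n → ZMod 2) (g2 : Fin h2 → Fin n → ZMod 2) :
    minkXor (LZ c1 g1) (LZ c2 g2) = LZ (c1 + c2) (Fin.append g1 g2) := by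
  ext x
  simp only [minkXor, LZ, Set.mem_setOf_eq]
  constructor
  · rintro ⟨z1, ⟨β1, rfl⟩, z2, ⟨β2, rfl⟩, rfl⟩
    refine ⟨Fin.append β1 β2, ?_⟩
    rw [Fin.sum_univ_add]
    simp [Fin.append_left, Fin.append_right]
    abel
  · rintro ⟨β, rfl⟩
    refine ⟨c1 + ∑ i, β (Fin.castAdd h2 i) • g1 i, ⟨_, rfl⟩,
      c2 + ∑ i, β (Fin.natAdd h1 i) • g2 i, ⟨_, rfl⟩, ?_⟩
    rw [Fin.sum_univ_add]
    simp [Fin.append_left, Fin.append_right]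
    abel
end

section
/- For logical zonotopes L1 = ⟨c1, G1⟩ and L2 = ⟨c2, G2⟩, the Minkowski AND { x ∧ y | x ∈ L1, y ∈ L2 } is contained in the logical zonotope L∧ = ⟨c1 ∧ c2, G∧⟩ whose generators are all vectors c1 ∧ g_{2,j}, c2 ∧ g_{1,i}, and g_{1,i} ∧ g_{2,j} for 1 ≤ i ≤ h1, 1 ≤ j ≤ h2. (The containment may be strict.) -/
/-- Minkowski AND of two sets of Boolean vectors. -/
def minkAnd {n : ℕ} (L1 L2 : Set (Fin n → ZMod 2)) : Set (Fin n → ZMod 2) :=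
  { z | ∃ x ∈ L1, ∃ y ∈ L2, z = x * y }

/-- The Minkowski AND of two logical zonotopes is contained in the logical zonotope
with center `c1 ∧ c2` and generators `c1 ∧ g_{2,j}`, `c2 ∧ g_{1,i}`, `g_{1,i} ∧ g_{2,j}`. -/
theorem LZ_minkAnd_subset {n h1 h2 : ℕ} (c1 c2 : Fin n → ZMod 2)
    (g1 : Fin h1 → Fin n → ZMod 2) (g2 : Fin h2 → Fin n → ZMod 2) :
    minkAnd (LZ c1 g1) (LZ c2 g2) ⊆
      LZ (c1 * c2)
        (Sum.elim (fun j => c1 * g2 j)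
          (Sum.elim (fun i => c2 * g1 i)
            (fun p : Fin h1 × Fin h2 => g1 p.1 * g2 p.2))) := by
  rintro z ⟨x, ⟨β1, rfl⟩, y, ⟨β2, rfl⟩, rfl⟩
  refine ⟨Sum.elim β2 (Sum.elim β1 (fun p => β1 p.1 * β2 p.2)), ?_⟩
  funext k
  simp only [Fintype.sum_sum_type, Fintype.sum_prod_type, Sum.elim_inl, Sum.elim_inr, Pi.add_apply, Pi.mul_apply,
    Finset.sum_apply, Pi.smul_apply, smul_eq_mul]
  rw [add_mul, mul_add, mul_add, Finset.sum_mul_sum]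
  simp only [Finset.mul_sum, Finset.sum_mul]
  simp only [mul_comm, mul_left_comm, mul_assoc]
  ring
end

section
/- The intersection of two logical zonotopes L1 ∩ L2 is contained in the over-approximating AND zonotope L∧: L1 ∩ L2 ⊆ L∧, where L∧ has center c1 ∧ c2 and generators c1 ∧ g_{2,j}, c2 ∧ g_{1,i}, g_{1,i} ∧ g_{2,j}. -/
/-- The intersection of two logical zonotopes is contained in the over-approximating
AND zonotope with center `c1 ∧ c2` and generators `c1 ∧ g_{2,j}`, `c2 ∧ g_{1,i}`,
`g_{1,i} ∧ g_{2,j}`. -/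
theorem LZ_inter_subset {n h1 h2 : ℕ} (c1 c2 : Fin n → ZMod 2)
    (g1 : Fin h1 → Fin n → ZMod 2) (g2 : Fin h2 → Fin n → ZMod 2) :
    LZ c1 g1 ∩ LZ c2 g2 ⊆
      LZ (c1 * c2)
        (Sum.elim (fun j => c1 * g2 j)
          (Sum.elim (fun i => c2 * g1 i)
            (fun p : Fin h1 × Fin h2 => g1 p.1 * g2 p.2))) := by
  rintro x ⟨⟨β1, hx1⟩, ⟨β2, hx2⟩⟩
  refine ⟨Sum.elim β2 (Sum.elim β1 (fun p => β1 p.1 * β2 p.2)), ?_⟩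
  have hxx : x = x * x := by
    funext k
    have : ∀ a : ZMod 2, a = a * a := by decide
    exact this (x k)
  calc x = x * x := hxx
    _ = (c1 + ∑ i, β1 i • g1 i) * (c2 + ∑ j, β2 j • g2 j) := by
        rw [← hx1, ← hx2]
    _ = _ := by
        funext k
        simp only [Fintype.sum_sum_type, Fintype.sum_prod_type, Sum.elim_inl,
          Sum.elim_inr, Pi.add_apply, Pi.mul_apply, Finset.sum_apply,
          Pi.smul_apply, smul_eq_mul, add_mul, mul_add, Finset.mul_sum,
          Finset.sum_mul, Finset.sum_add_distrib]
        rw [Finset.sum_comm]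
        simp only [mul_comm, mul_left_comm, mul_assoc]
        ring
end

section
/- Exactness of the constrained intersection: given two constrained polynomial logical zonotopes C1 and C2 (with generator/constraint data (c1, G1, E1, A1, b1, R1) on p1 parameters and (c2, G2, E2, A2, b2, R2) on p2 parameters), the set of points x = c1 ⊕ ⊕_i (∏_k α_k^{E1(k,i)}) g_{1,i} over α ∈ {0,1}^{p1+p2} satisfying (i) the constraint of C1 on α_1,…,α_{p1}, (ii) the constraint of C2 on α_{p1+1},…,α_{p1+p2}, and (iii) the coupling constraint ⊕_i (∏_k α_k^{E1(k,i)}) g_{1,i} ⊕ ⊕_i (∏_k α_{p1+k}^{E2(k,i)}) g_{2,i} = c1 ⊕ c2, is exactly C1 ∩ C2. -/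
/-- Constrained polynomial logical zonotope `⟨c, G, E, A, b, R⟩` over 𝔹 = ZMod 2:
points `c ⊕ ⊕_i (∏_k α_k^{E(k,i)}) g_i` over `α ∈ {0,1}^p` subject to
`⊕_j (∏_k α_k^{R(k,j)}) A(·,j) = b`. -/
def CPLZ {n p h q m : ℕ} (c : Fin n → ZMod 2) (g : Fin h → Fin n → ZMod 2)
    (E : Fin p → Fin h → ZMod 2) (A : Fin q → Fin m → ZMod 2)
    (b : Fin m → ZMod 2) (R : Fin p → Fin q → ZMod 2) : Set (Fin n → ZMod 2) :=
  { x | ∃ α : Fin p → ZMod 2,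
      x = c + ∑ i, (∏ k, α k ^ (E k i).val) • g i ∧
      ∑ j, (∏ k, α k ^ (R k j).val) • A j = b }

lemma zmod2_swap : ∀ s t u v : ZMod 2, s + t = u + v → u + s = v + t ∧ t + v = s + u := by
  decide

lemma pi_swap {n : ℕ} {s t u v : Fin n → ZMod 2} (h : s + t = u + v) :
    u + s = v + t := by
  funext i
  exact (zmod2_swap (s i) (t i) (u i) (v i) (congrFun h i)).1

lemma pi_swap2 {n : ℕ} {s t u v : Fin n → ZMod 2} (h : s + t = u + v) :
    t + v = s + u := by
  funext i
  exact (zmod2_swap (s i) (t i) (u i) (v i) (congrFun h i)).2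

/-- Exactness of the constrained intersection: points `c1 ⊕ ⊕_i (∏_k α_k^{E1(k,i)}) g_{1,i}`
over the disjoint union of parameters `(α, α') ∈ {0,1}^{p1} × {0,1}^{p2}` satisfying
(i) the constraint of `C1` on `α`, (ii) the constraint of `C2` on `α'`, and
(iii) the coupling constraint
`⊕_i (∏_k α_k^{E1(k,i)}) g_{1,i} ⊕ ⊕_i (∏_k α'_k^{E2(k,i)}) g_{2,i} = c1 ⊕ c2`,
form exactly `C1 ∩ C2`. -/
theorem CPLZ_intersection_exact {n p1 p2 h1 h2 q1 q2 m1 m2 : ℕ}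
    (c1 c2 : Fin n → ZMod 2)
    (g1 : Fin h1 → Fin n → ZMod 2) (g2 : Fin h2 → Fin n → ZMod 2)
    (E1 : Fin p1 → Fin h1 → ZMod 2) (E2 : Fin p2 → Fin h2 → ZMod 2)
    (A1 : Fin q1 → Fin m1 → ZMod 2) (A2 : Fin q2 → Fin m2 → ZMod 2)
    (b1 : Fin m1 → ZMod 2) (b2 : Fin m2 → ZMod 2)
    (R1 : Fin p1 → Fin q1 → ZMod 2) (R2 : Fin p2 → Fin q2 → ZMod 2) :
    { x | ∃ (α : Fin p1 → ZMod 2) (α' : Fin p2 → ZMod 2),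
        x = c1 + ∑ i, (∏ k, α k ^ (E1 k i).val) • g1 i ∧
        (∑ j, (∏ k, α k ^ (R1 k j).val) • A1 j = b1) ∧
        (∑ j, (∏ k, α' k ^ (R2 k j).val) • A2 j = b2) ∧
        (∑ i, (∏ k, α k ^ (E1 k i).val) • g1 i) +
          (∑ i, (∏ k, α' k ^ (E2 k i).val) • g2 i) = c1 + c2 } =
      CPLZ c1 g1 E1 A1 b1 R1 ∩ CPLZ c2 g2 E2 A2 b2 R2 := by
  ext x
  simp only [Set.mem_setOf_eq, Set.mem_inter_iff, CPLZ]
  constructor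
  · rintro ⟨α, α', hx, hc1, hc2, hcoup⟩
    refine ⟨⟨α, hx, hc1⟩, ⟨α', ?_, hc2⟩⟩
    rw [hx]
    exact pi_swap hcoup
  · rintro ⟨⟨α, hx1, hc1⟩, ⟨α', hx2, hc2⟩⟩
    refine ⟨α, α', hx1, hc1, hc2, ?_⟩
    exact pi_swap2 (hx1 ▸ hx2 : c1 + _ = c2 + _)
end
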